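/- Lindenbaum-type extension lemma: if a sequent Γ ⇒ Δ in a countable syntax L₁ is not derivable in G(FOC+J), and L₂ extends L₁ by a countably infinite set of fresh variables, then there exists a prime L₂-complete pair (Γ*, Δ*) with Γ ⊆ Γ*, Δ ⊆ Δ*, where Γ* ∪ Δ* = Form_{L₂}. -/

import Mathlib

/-- Terms: variables (named by naturals) and constant symbols. -/
inductive Tm : Type
| var : ℕ → Tm
| const : ℕ → Tm
deriving DecidableEq

/-- Formulas of the combined language: atoms, ⊥, ∧, ∨, intuitionistic and
classical implication, intuitionistic and classical universal quantifier,
and the existential quantifier. -/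
inductive Fm : Type
| atom : ℕ → List Tm → Fm
| bot : Fm
| and : Fm → Fm → Fm
| or : Fm → Fm → Fm
| impI : Fm → Fm → Fm
| impC : Fm → Fm → Fm
| allI : ℕ → Fm → Fm
| allC : ℕ → Fm → Fm
| ex : ℕ → Fm → Fm
deriving DecidableEq

def Fm.top : Fm := .impI .bot .bot
def Fm.negC (A : Fm) : Fm := .impC A .bot
def Fm.negI (A : Fm) : Fm := .impI A .bot

def Tm.fv : Tm → Set ℕ
| .var x => {x}
| .const _ => ∅

/-- Free variables of a formula. -/
def Fm.fv : Fm → Set ℕ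
| .atom _ ts => {x | ∃ t ∈ ts, x ∈ t.fv}
| .bot => ∅
| .and A B => A.fv ∪ B.fv
| .or A B => A.fv ∪ B.fv
| .impI A B => A.fv ∪ B.fv
| .impC A B => A.fv ∪ B.fv
| .allI x A => A.fv \ {x}
| .allC x A => A.fv \ {x}
| .ex x A => A.fv \ {x}

/-- Bound variables of a formula. -/
def Fm.bv : Fm → Set ℕ
| .atom _ _ => ∅
| .bot => ∅
| .and A B => A.bv ∪ B.bv
| .or A B => A.bv ∪ B.bv
| .impI A B => A.bv ∪ B.bv
| .impC A B => A.bv ∪ B.bv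
| .allI x A => insert x A.bv
| .allC x A => insert x A.bv
| .ex x A => insert x A.bv

/-- All variables (free and bound) of a formula. -/
def Fm.vars : Fm → Set ℕ
| .atom _ ts => {x | ∃ t ∈ ts, x ∈ t.fv}
| .bot => ∅
| .and A B => A.vars ∪ B.vars
| .or A B => A.vars ∪ B.vars
| .impI A B => A.vars ∪ B.vars
| .impC A B => A.vars ∪ B.vars
| .allI x A => insert x A.vars
| .allC x A => insert x A.vars
| .ex x A => insert x A.vars

def Tm.subst (x : ℕ) (u : Tm) : Tm → Tm
| .var y => if y = x then u else .var y
| .const c => .const c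

/-- Substitution of term `u` for variable `x` (under the standing assumption
that bound and free variables are disjoint, this is clash-avoiding). -/
def Fm.subst : Fm → ℕ → Tm → Fm
| .atom P ts, x, u => .atom P (ts.map (Tm.subst x u))
| .bot, _, _ => .bot
| .and A B, x, u => .and (A.subst x u) (B.subst x u)
| .or A B, x, u => .or (A.subst x u) (B.subst x u)
| .impI A B, x, u => .impI (A.subst x u) (B.subst x u)
| .impC A B, x, u => .impC (A.subst x u) (B.subst x u)
| .allI y A, x, u => .allI y (if y = x then A else A.subst x u)
| .allC y A, x, u => .allC y (if y = x then A else A.subst x u)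
| .ex y A, x, u => .ex y (if y = x then A else A.subst x u)

/-- Persistent formulas: atoms, →ᵢ-formulas and ∀ᵢ-formulas. -/
def Fm.Persistent : Fm → Prop
| .atom _ _ => True
| .impI _ _ => True
| .allI _ _ => True
| _ => False

/-- Purely intuitionistic formulas (no →_c, no ∀_c). -/
def Fm.IsJ : Fm → Prop
| .atom _ _ => True
| .bot => True
| .and A B => A.IsJ ∧ B.IsJ
| .or A B => A.IsJ ∧ B.IsJ
| .impI A B => A.IsJ ∧ B.IsJ
| .impC _ _ => False
| .allI _ A => A.IsJ
| .allC _ _ => False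
| .ex _ A => A.IsJ

/-- Purely classical formulas (no →ᵢ, no ∀ᵢ). -/
def Fm.IsC : Fm → Prop
| .atom _ _ => True
| .bot => True
| .and A B => A.IsC ∧ B.IsC
| .or A B => A.IsC ∧ B.IsC
| .impI _ _ => False
| .impC A B => A.IsC ∧ B.IsC
| .allI _ _ => False
| .allC _ A => A.IsC
| .ex _ A => A.IsC

/-- A raw Kripke structure for the combined first-order language. -/
structure KModel (U : Type) where
  W : Type
  R : W → W → Prop
  D : W → Set U
  cI : ℕ → U
  V : ℕ → W → Set (List U)

/-- The conditions making a raw structure an intuitionistic Kripke model: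
`R` is a preorder, domains are nonempty, monotone, with nonempty
intersection, constants are rigid (interpreted in every domain), and the
predicate valuation is monotone (hereditary) along `R`. -/
structure KModel.IsKripke {U : Type} (M : KModel U) : Prop where
  wNonempty : Nonempty M.W
  refl : ∀ w, M.R w w
  trans : ∀ {w v u}, M.R w v → M.R v u → M.R w u
  dNonempty : ∀ w, (M.D w).Nonempty
  dMono : ∀ {w v}, M.R w v → M.D w ⊆ M.D v
  dInter : (⋂ w, M.D w).Nonempty
  cMem : ∀ c w, M.cI c ∈ M.D w
  vMono : ∀ P {w v}, M.R w v → M.V P w ⊆ M.V P v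

def Tm.val {U : Type} (M : KModel U) (g : ℕ → U) : Tm → U
| .var x => g x
| .const c => M.cI c

/-- Satisfaction of a formula at a world under an assignment. -/
def Fm.Sat {U : Type} (M : KModel U) : Fm → M.W → (ℕ → U) → Prop
| .atom P ts, w, g => ts.map (Tm.val M g) ∈ M.V P w
| .bot, _, _ => False
| .and A B, w, g => A.Sat M w g ∧ B.Sat M w g
| .or A B, w, g => A.Sat M w g ∨ B.Sat M w g
| .impI A B, w, g => ∀ v, M.R w v → A.Sat M v g → B.Sat M v g
| .impC A B, w, g => A.Sat M w g → B.Sat M w g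
| .allI x A, w, g => ∀ v, M.R w v → ∀ d ∈ M.D v, A.Sat M v (Function.update g x d)
| .allC x A, w, g => ∀ d ∈ M.D w, A.Sat M w (Function.update g x d)
| .ex x A, w, g => ∃ d ∈ M.D w, A.Sat M w (Function.update g x d)

/-- Multi-succedent semantic consequence: at every world of every Kripke
model, under any assignment into the domain, if all of `Γ` holds then some
member of `Δ` holds. -/
def Conseq (Γ Δ : List Fm) : Prop :=
  ∀ (U : Type) (M : KModel U), M.IsKripke → ∀ (w : M.W) (g : ℕ → U),
    (∀ x, g x ∈ M.D w) → (∀ A ∈ Γ, A.Sat M w g) → ∃ B ∈ Δ, B.Sat M w g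

/-- The sequent calculus G(FOC+J). -/
inductive Der : List Fm → List Fm → Prop
| id (A : Fm) : Der [A] [A]
| botL : Der [.bot] []
| perm {Γ Γ' Δ Δ'} : Γ.Perm Γ' → Δ.Perm Δ' → Der Γ Δ → Der Γ' Δ'
| wL {Γ Δ} (A) : Der Γ Δ → Der (A :: Γ) Δ
| wR {Γ Δ} (A) : Der Γ Δ → Der Γ (A :: Δ)
| cL {Γ Δ A} : Der (A :: A :: Γ) Δ → Der (A :: Γ) Δ
| cR {Γ Δ A} : Der Γ (A :: A :: Δ) → Der Γ (A :: Δ)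
| cut {Γ Δ P S A} : Der Γ (A :: Δ) → Der (A :: P) S → Der (Γ ++ P) (Δ ++ S)
| impIR {Θ A B} : (∀ C ∈ Θ, Fm.Persistent C) →
    Der (A :: Θ) [B] → Der Θ [.impI A B]
| impIL {Γ₁ Γ₂ Δ₁ Δ₂ A B} : Der Γ₁ (A :: Δ₁) → Der (B :: Γ₂) Δ₂ →
    Der (.impI A B :: (Γ₁ ++ Γ₂)) (Δ₁ ++ Δ₂)
| impCR {Γ Δ A B} : Der (A :: Γ) (B :: Δ) → Der Γ (.impC A B :: Δ)
| impCL {Γ₁ Γ₂ Δ₁ Δ₂ A B} : Der Γ₁ (A :: Δ₁) → Der (B :: Γ₂) Δ₂ →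
    Der (.impC A B :: (Γ₁ ++ Γ₂)) (Δ₁ ++ Δ₂)
| andR {Γ Δ A B} : Der Γ (A :: Δ) → Der Γ (B :: Δ) → Der Γ (.and A B :: Δ)
| andL1 {Γ Δ A B} : Der (A :: Γ) Δ → Der (.and A B :: Γ) Δ
| andL2 {Γ Δ A B} : Der (B :: Γ) Δ → Der (.and A B :: Γ) Δ
| orR1 {Γ Δ A B} : Der Γ (A :: Δ) → Der Γ (.or A B :: Δ)
| orR2 {Γ Δ A B} : Der Γ (B :: Δ) → Der Γ (.or A B :: Δ)
| orL {Γ Δ A B} : Der (A :: Γ) Δ → Der (B :: Γ) Δ → Der (.or A B :: Γ) Δ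
| allIR {Θ x z A} : (∀ C ∈ Θ, Fm.Persistent C) →
    (∀ C ∈ Θ, z ∉ Fm.fv C) → z ∉ Fm.fv (.allI x A) → z ∉ Fm.bv A →
    Der Θ [A.subst x (.var z)] → Der Θ [.allI x A]
| allIL {Γ Δ x A} (t : Tm) : (∀ y ∈ t.fv, y ∉ Fm.bv A) →
    Der (A.subst x t :: Γ) Δ → Der (.allI x A :: Γ) Δ
| allCR {Γ Δ x z A} : (∀ C ∈ Γ, z ∉ Fm.fv C) → (∀ C ∈ Δ, z ∉ Fm.fv C) →
    z ∉ Fm.fv (.allC x A) → z ∉ Fm.bv A →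
    Der Γ (A.subst x (.var z) :: Δ) → Der Γ (.allC x A :: Δ)
| allCL {Γ Δ x A} (t : Tm) : (∀ y ∈ t.fv, y ∉ Fm.bv A) →
    Der (A.subst x t :: Γ) Δ → Der (.allC x A :: Γ) Δ
| exR {Γ Δ x A} (t : Tm) : (∀ y ∈ t.fv, y ∉ Fm.bv A) →
    Der Γ (A.subst x t :: Δ) → Der Γ (.ex x A :: Δ)
| exL {Γ Δ x z A} : (∀ C ∈ Γ, z ∉ Fm.fv C) → (∀ C ∈ Δ, z ∉ Fm.fv C) →
    z ∉ Fm.fv (.ex x A) → z ∉ Fm.bv A →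
    Der (A.subst x (.var z) :: Γ) Δ → Der (.ex x A :: Γ) Δ

/-- A term of syntax `L` (a syntax is identified with its set of variables). -/
def TmInSyn (L : Set ℕ) (t : Tm) : Prop := t.fv ⊆ L

/-- An `L`-formula: all its variables belong to the syntax `L`. -/
def InSyn (L : Set ℕ) (A : Fm) : Prop := A.vars ⊆ L

/-- Derivability for (possibly infinite) sets of formulas: some finite
sub-sequent is derivable in G(FOC+J). -/
def SetDer (Γ Δ : Set Fm) : Prop :=
  ∃ G D : List Fm, (∀ A ∈ G, A ∈ Γ) ∧ (∀ A ∈ D, A ∈ Δ) ∧ Der G D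

/-- A prime pair with respect to a syntax `L`. -/
structure PrimePair (L : Set ℕ) (Γ Δ : Set Fm) : Prop where
  syntaxL : ∀ A ∈ Γ ∪ Δ, InSyn L A
  theory : ∀ A, InSyn L A → SetDer Γ {A} → A ∈ Γ
  underiv : ¬ SetDer Γ Δ
  prime : ∀ A B, Fm.or A B ∈ Γ → A ∈ Γ ∨ B ∈ Γ
  exProp : ∀ x A, Fm.ex x A ∈ Γ → ∃ t : Tm, TmInSyn L t ∧ A.subst x t ∈ Γ
  allCProp : ∀ x A, Fm.allC x A ∈ Δ → ∃ t : Tm, TmInSyn L t ∧ A.subst x t ∈ Δ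

/-- `L`-completeness of a pair: every `L`-formula is in `Γ` or in `Δ`. -/
def LComplete (L : Set ℕ) (Γ Δ : Set Fm) : Prop := Γ ∪ Δ = {A | InSyn L A}

/-! Enumerate all formulas and decide them one at a time: a formula joins the left side if the
pair stays underivable, and otherwise the right side, where it keeps the pair underivable by
cut. An existential formula joining the left brings along its instance at a variable of `L₂`
not used so far, and a classical universal joining the right its counter-instance; the rules
`∃L` and `∀_cR`, read backwards, show that this preserves underivability. Such variables never
run out, since every stage adds finitely many formulas to a pair of `L₁`-formulas. As
derivations are finite, the union of the stages is underivable, and being complete it is a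
prime theory. -/

def Tm.toSum : Tm → ℕ ⊕ ℕ
| .var x => .inl x
| .const c => .inr c

theorem Tm.toSum_injective : Function.Injective Tm.toSum := by
  rintro (_ | _) (_ | _) h <;> simp_all [Tm.toSum]

def Fm.code : Fm → ℕ
| .atom P ts => Nat.pair 0 (Nat.pair P (Encodable.encode (ts.map Tm.toSum)))
| .bot => Nat.pair 1 0
| .and A B => Nat.pair 2 (Nat.pair A.code B.code)
| .or A B => Nat.pair 3 (Nat.pair A.code B.code)
| .impI A B => Nat.pair 4 (Nat.pair A.code B.code)
| .impC A B => Nat.pair 5 (Nat.pair A.code B.code)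
| .allI x A => Nat.pair 6 (Nat.pair x A.code)
| .allC x A => Nat.pair 7 (Nat.pair x A.code)
| .ex x A => Nat.pair 8 (Nat.pair x A.code)

theorem Fm.code_injective : Function.Injective Fm.code := by
  intro A
  induction A <;> intro B h <;> cases B <;>
    simp_all [Fm.code, Nat.pair_eq_pair, (List.map_injective_iff.2 Tm.toSum_injective).eq_iff] <;>
    grind

instance : Countable Fm := Fm.code_injective.countable

instance : Nonempty Fm := ⟨.bot⟩

theorem Tm.fv_subst_subset (x : ℕ) (t u : Tm) : (Tm.subst x t u).fv ⊆ u.fv ∪ t.fv := by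
  cases u with
  | var y => by_cases hy : y = x <;> simp [Tm.subst, hy, Tm.fv]
  | const c => simp [Tm.subst, Tm.fv]

theorem Fm.vars_subst_subset (A : Fm) (x : ℕ) (t : Tm) :
    (A.subst x t).vars ⊆ A.vars ∪ t.fv := by
  induction A with
  | atom P ts =>
    rintro y ⟨_, hmem, hy⟩
    obtain ⟨u, hu, rfl⟩ := List.mem_map.1 hmem
    exact (Tm.fv_subst_subset x t u hy).imp (fun h => ⟨u, hu, h⟩) id
  | bot => simp [Fm.subst, Fm.vars]
  | and A B ihA ihB | or A B ihA ihB | impI A B ihA ihB | impC A B ihA ihB =>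
    simp only [Fm.subst, Fm.vars]
    grind
  | allI y A ih | allC y A ih | ex y A ih =>
    simp only [Fm.subst, Fm.vars]
    split_ifs <;> grind

theorem Tm.fv_finite (t : Tm) : t.fv.Finite := by
  cases t <;> simp [Tm.fv]

theorem Fm.vars_finite (A : Fm) : A.vars.Finite := by
  induction A with
  | atom P ts =>
    refine ((List.finite_toSet ts).biUnion fun t _ => t.fv_finite).subset ?_
    rintro x ⟨t, ht, hx⟩
    exact Set.mem_biUnion ht hx
  | bot => exact Set.finite_empty
  | and _ _ ihA ihB | or _ _ ihA ihB | impI _ _ ihA ihB | impC _ _ ihA ihB => exact ihA.union ihB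
  | allI x _ ih | allC x _ ih | ex x _ ih => exact ih.insert x

theorem Fm.fv_subset_vars (A : Fm) : A.fv ⊆ A.vars := by
  induction A <;> simp only [Fm.fv, Fm.vars] <;> grind

theorem Fm.bv_subset_vars (A : Fm) : A.bv ⊆ A.vars := by
  induction A <;> simp only [Fm.bv, Fm.vars] <;> grind

namespace Der

variable {G D : List Fm}

theorem weaken_left (E : List Fm) (h : Der G D) : Der (E ++ G) D := by
  induction E with
  | nil => exact h
  | cons A E ih => exact .wL A ih

theorem weaken_right (E : List Fm) (h : Der G D) : Der G (E ++ D) := by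
  induction E with
  | nil => exact h
  | cons A E ih => exact .wR A ih

theorem contract_left_of_mem {A : Fm} (h : Der (A :: G) D) (hA : A ∈ G) : Der G D := by
  have hp := List.perm_cons_erase hA
  exact .perm hp.symm (.refl D) (.cL (.perm (hp.cons A) (.refl D) h))

theorem contract_right_of_mem {A : Fm} (h : Der G (A :: D)) (hA : A ∈ D) : Der G D := by
  have hp := List.perm_cons_erase hA
  exact .perm (.refl G) hp.symm (.cR (.perm (.refl G) (hp.cons A) h))

theorem absorb_left {G' : List Fm} (h : Der (G' ++ G) D) (hG : ∀ A ∈ G, A ∈ G') :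
    Der G' D := by
  induction G with
  | nil => simpa using h
  | cons A G ih =>
    refine ih ?_ fun B hB => hG B (List.mem_cons_of_mem A hB)
    exact contract_left_of_mem (.perm List.perm_middle (.refl D) h)
      (List.mem_append_left G (hG A List.mem_cons_self))

theorem absorb_right {D' : List Fm} (h : Der G (D' ++ D)) (hD : ∀ A ∈ D, A ∈ D') :
    Der G D' := by
  induction D with
  | nil => simpa using h
  | cons A D ih =>
    refine ih ?_ fun B hB => hD B (List.mem_cons_of_mem A hB)
    exact contract_right_of_mem (.perm (.refl G) List.perm_middle h)
      (List.mem_append_left D (hD A List.mem_cons_self))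

theorem mono {G' D' : List Fm} (h : Der G D) (hG : ∀ A ∈ G, A ∈ G') (hD : ∀ A ∈ D, A ∈ D') :
    Der G' D' :=
  absorb_left (absorb_right (weaken_right D' (weaken_left G' h)) hD) hG

theorem or_disjuncts (A B : Fm) : Der [.or A B] [A, B] :=
  .orL (.perm (.refl _) (.swap A B []) (.wR B (.id A))) (.wR A (.id B))

end Der

namespace SetDer

variable {Γ Δ Γ' Δ' : Set Fm}

theorem mono (h : SetDer Γ Δ) (hΓ : Γ ⊆ Γ') (hΔ : Δ ⊆ Δ') : SetDer Γ' Δ' :=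
  let ⟨G, D, hG, hD, hd⟩ := h
  ⟨G, D, fun A hA => hΓ (hG A hA), fun A hA => hΔ (hD A hA), hd⟩

theorem exists_der_cons_left {A : Fm} (h : SetDer (insert A Γ) Δ) :
    ∃ G D, (∀ C ∈ G, C ∈ Γ) ∧ (∀ C ∈ D, C ∈ Δ) ∧ Der (A :: G) D := by
  obtain ⟨G, D, hG, hD, hd⟩ := h
  refine ⟨G.filter (· ≠ A), D, fun C hC => ?_, hD, hd.mono (fun C hC => ?_) fun _ => id⟩
  · obtain ⟨hCG, hCA⟩ := List.mem_filter.1 hC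
    exact (hG C hCG).resolve_left (by simpa using hCA)
  · by_cases hCA : C = A <;> simp [hCA, hC]

theorem exists_der_cons_right {A : Fm} (h : SetDer Γ (insert A Δ)) :
    ∃ G D, (∀ C ∈ G, C ∈ Γ) ∧ (∀ C ∈ D, C ∈ Δ) ∧ Der G (A :: D) := by
  obtain ⟨G, D, hG, hD, hd⟩ := h
  refine ⟨G, D.filter (· ≠ A), hG, fun C hC => ?_, hd.mono (fun _ => id) fun C hC => ?_⟩
  · obtain ⟨hCD, hCA⟩ := List.mem_filter.1 hC
    exact (hD C hCD).resolve_left (by simpa using hCA)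
  · by_cases hCA : C = A <;> simp [hCA, hC]

theorem cut {A : Fm} (h₁ : SetDer Γ (insert A Δ)) (h₂ : SetDer (insert A Γ) Δ) :
    SetDer Γ Δ := by
  obtain ⟨G₁, D₁, hG₁, hD₁, hd₁⟩ := exists_der_cons_right h₁
  obtain ⟨G₂, D₂, hG₂, hD₂, hd₂⟩ := exists_der_cons_left h₂
  refine ⟨G₁ ++ G₂, D₁ ++ D₂, ?_, ?_, .cut hd₁ hd₂⟩ <;>
    simp only [List.mem_append] <;> rintro C (hC | hC) <;> simp_all

end SetDer

def varsOf (S : Set Fm) : Set ℕ := ⋃ A ∈ S, A.vars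

theorem notMem_fv_of_notMem_varsOf {S : Set Fm} {z : ℕ} {A : Fm} (hz : z ∉ varsOf S)
    (hA : A ∈ S) : z ∉ A.fv :=
  fun h => hz (Set.mem_biUnion hA (A.fv_subset_vars h))

theorem varsOf_subset_iff {S : Set Fm} {L : Set ℕ} : varsOf S ⊆ L ↔ ∀ A ∈ S, InSyn L A :=
  Set.iUnion₂_subset_iff

theorem infinite_diff_varsOf_insert {L : Set ℕ} {S : Set Fm} (h : (L \ varsOf S).Infinite)
    (A : Fm) : (L \ varsOf (insert A S)).Infinite := by
  rw [varsOf, Set.biUnion_insert, Set.union_comm, ← Set.sdiff_sdiff]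
  exact h.sdiff A.vars_finite

/-- The Henkin instance of `∃x B` at `z`. Every other formula is its own instance, so that adding
it alongside the formula changes nothing. -/
def Fm.exInst (z : ℕ) : Fm → Fm
| .ex x B => B.subst x (.var z)
| A => A

def Fm.allCInst (z : ℕ) : Fm → Fm
| .allC x B => B.subst x (.var z)
| A => A

theorem Fm.vars_exInst_subset (z : ℕ) (A : Fm) : (A.exInst z).vars ⊆ insert z A.vars := by
  cases A
  case ex x B =>
    intro y hy
    rcases B.vars_subst_subset x (.var z) hy with h | h
    · exact Or.inr (Or.inr h)
    · exact Or.inl h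
  all_goals exact Set.subset_insert z _

theorem Fm.vars_allCInst_subset (z : ℕ) (A : Fm) : (A.allCInst z).vars ⊆ insert z A.vars := by
  cases A
  case allC x B =>
    intro y hy
    rcases B.vars_subst_subset x (.var z) hy with h | h
    · exact Or.inr (Or.inr h)
    · exact Or.inl h
  all_goals exact Set.subset_insert z _

theorem not_setDer_insert_exInst {Γ Δ : Set Fm} {A : Fm} {z : ℕ} (h : ¬ SetDer Γ Δ)
    (hA : A ∈ Γ) (hz : z ∉ varsOf (Γ ∪ Δ)) : ¬ SetDer (insert (A.exInst z) Γ) Δ := by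
  cases A
  case ex x B =>
    intro hder
    obtain ⟨G, D, hG, hD, hd⟩ := hder.exists_der_cons_left
    have hzA : z ∉ (Fm.ex x B).vars := fun h => hz (Set.mem_biUnion (Or.inl hA) h)
    refine h ⟨.ex x B :: G, D, List.forall_mem_cons.2 ⟨hA, hG⟩, hD, .exL ?_ ?_ ?_ ?_ hd⟩
    · exact fun C hC => notMem_fv_of_notMem_varsOf hz (Or.inl (hG C hC))
    · exact fun C hC => notMem_fv_of_notMem_varsOf hz (Or.inr (hD C hC))
    · exact notMem_fv_of_notMem_varsOf hz (Or.inl hA)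
    · exact fun h => hzA (Or.inr (B.bv_subset_vars h))
  all_goals simpa only [Fm.exInst, Set.insert_eq_of_mem hA] using h

theorem not_setDer_insert_allCInst {Γ Δ : Set Fm} {A : Fm} {z : ℕ} (h : ¬ SetDer Γ Δ)
    (hA : A ∈ Δ) (hz : z ∉ varsOf (Γ ∪ Δ)) : ¬ SetDer Γ (insert (A.allCInst z) Δ) := by
  cases A
  case allC x B =>
    intro hder
    obtain ⟨G, D, hG, hD, hd⟩ := hder.exists_der_cons_right
    have hzA : z ∉ (Fm.allC x B).vars := fun h => hz (Set.mem_biUnion (Or.inr hA) h)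
    refine h ⟨G, .allC x B :: D, hG, List.forall_mem_cons.2 ⟨hA, hD⟩, .allCR ?_ ?_ ?_ ?_ hd⟩
    · exact fun C hC => notMem_fv_of_notMem_varsOf hz (Or.inl (hG C hC))
    · exact fun C hC => notMem_fv_of_notMem_varsOf hz (Or.inr (hD C hC))
    · exact notMem_fv_of_notMem_varsOf hz (Or.inr hA)
    · exact fun h => hzA (Or.inr (B.bv_subset_vars h))
  all_goals simpa only [Fm.allCInst, Set.insert_eq_of_mem hA] using h

theorem InSyn.exInst {L : Set ℕ} {A : Fm} {z : ℕ} (hA : InSyn L A) (hz : z ∈ L) :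
    InSyn L (A.exInst z) :=
  (A.vars_exInst_subset z).trans (Set.insert_subset hz hA)

theorem InSyn.allCInst {L : Set ℕ} {A : Fm} {z : ℕ} (hA : InSyn L A) (hz : z ∈ L) :
    InSyn L (A.allCInst z) :=
  (A.vars_allCInst_subset z).trans (Set.insert_subset hz hA)

def HenkinDecided (L : Set ℕ) (Γ Δ : Set Fm) (A : Fm) : Prop :=
  (∃ z ∈ L, A ∈ Γ ∧ A.exInst z ∈ Γ) ∨ (∃ z ∈ L, A ∈ Δ ∧ A.allCInst z ∈ Δ)

theorem HenkinDecided.mono {L : Set ℕ} {Γ Δ Γ' Δ' : Set Fm} {A : Fm}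
    (h : HenkinDecided L Γ Δ A) (hΓ : Γ ⊆ Γ') (hΔ : Δ ⊆ Δ') : HenkinDecided L Γ' Δ' A :=
  h.imp (fun ⟨z, hz, h₁, h₂⟩ => ⟨z, hz, hΓ h₁, hΓ h₂⟩)
    fun ⟨z, hz, h₁, h₂⟩ => ⟨z, hz, hΔ h₁, hΔ h₂⟩

theorem primePair_lComplete_of_henkinDecided {L : Set ℕ} {Γ Δ : Set Fm}
    (hsyn : ∀ A ∈ Γ ∪ Δ, InSyn L A) (hund : ¬ SetDer Γ Δ)
    (hdec : ∀ A, InSyn L A → HenkinDecided L Γ Δ A) :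
    PrimePair L Γ Δ ∧ LComplete L Γ Δ := by
  have hdisj : ∀ A ∈ Γ, A ∉ Δ := fun A hΓ hΔ => hund ⟨[A], [A], by simpa, by simpa, .id A⟩
  have hright : ∀ A, InSyn L A → A ∉ Γ → A ∈ Δ := fun A hA hΓ =>
    (hdec A hA).elim (fun ⟨_, _, h, _⟩ => absurd h hΓ) fun ⟨_, _, h, _⟩ => h
  refine ⟨⟨hsyn, ?_, hund, ?_, ?_, ?_⟩, ?_⟩
  · intro A hA hder
    by_contra hΓ
    exact hund (hder.mono subset_rfl (Set.singleton_subset_iff.2 (hright A hA hΓ)))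
  · intro A B hAB
    have hs := hsyn _ (Or.inl hAB)
    by_contra! ⟨hA, hB⟩
    have hAΔ := hright A (fun y hy => hs (Or.inl hy)) hA
    have hBΔ := hright B (fun y hy => hs (Or.inr hy)) hB
    exact hund ⟨[.or A B], [A, B], by simpa, by simp [hAΔ, hBΔ], Der.or_disjuncts A B⟩
  · intro x B hB
    rcases hdec _ (hsyn _ (Or.inl hB)) with ⟨z, hz, -, hzB⟩ | ⟨-, -, hB', -⟩
    · exact ⟨.var z, Set.singleton_subset_iff.2 hz, hzB⟩
    · exact absurd hB' (hdisj _ hB)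
  · intro x B hB
    rcases hdec _ (hsyn _ (Or.inr hB)) with ⟨-, -, hB', -⟩ | ⟨z, hz, -, hzB⟩
    · exact absurd hB (hdisj _ hB')
    · exact ⟨.var z, Set.singleton_subset_iff.2 hz, hzB⟩
  · refine Set.Subset.antisymm hsyn fun A hA => ?_
    exact (hdec A hA).imp (fun ⟨_, _, h, _⟩ => h) fun ⟨_, _, h, _⟩ => h

theorem exists_forall_mem_of_monotone {α : Type*} {f : ℕ → Set α} (hf : Monotone f)
    {l : List α} (hl : ∀ a ∈ l, a ∈ ⋃ n, f n) : ∃ N, ∀ a ∈ l, a ∈ f N := by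
  classical
  obtain ⟨N, hN⟩ := hf.directed_le.exists_mem_subset_of_finset_subset_biUnion
    (s := l.toFinset) fun a ha => hl a (List.mem_toFinset.1 ha)
  exact ⟨N, fun a ha => hN (List.mem_toFinset.2 ha)⟩

theorem not_setDer_iUnion {Γ Δ : ℕ → Set Fm} (hΓ : Monotone Γ) (hΔ : Monotone Δ)
    (h : ∀ n, ¬ SetDer (Γ n) (Δ n)) : ¬ SetDer (⋃ n, Γ n) (⋃ n, Δ n) := by
  rintro ⟨G, D, hG, hD, hd⟩
  obtain ⟨M, hM⟩ := exists_forall_mem_of_monotone hΓ hG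
  obtain ⟨N, hN⟩ := exists_forall_mem_of_monotone hΔ hD
  exact h (max M N) ⟨G, D, fun A hA => hΓ (le_max_left M N) (hM A hA),
    fun A hA => hΔ (le_max_right M N) (hN A hA), hd⟩

/-- A stage of the Lindenbaum construction; the unused variables counted by `fresh` supply the
Henkin witnesses of the later stages. -/
structure Stage (L : Set ℕ) where
  Γ : Set Fm
  Δ : Set Fm
  inSyn : ∀ A ∈ Γ ∪ Δ, InSyn L A
  underiv : ¬ SetDer Γ Δ
  fresh : (L \ varsOf (Γ ∪ Δ)).Infinite

namespace Stage

variable {L : Set ℕ}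

instance : Preorder (Stage L) where
  le S T := S.Γ ⊆ T.Γ ∧ S.Δ ⊆ T.Δ
  le_refl S := ⟨subset_rfl, subset_rfl⟩
  le_trans _ _ _ h₁ h₂ := ⟨h₁.1.trans h₂.1, h₁.2.trans h₂.2⟩

noncomputable def freshVar (S : Stage L) : ℕ := S.fresh.nonempty.some

theorem freshVar_mem (S : Stage L) : S.freshVar ∈ L \ varsOf (S.Γ ∪ S.Δ) :=
  S.fresh.nonempty.some_mem

def insertLeft (S : Stage L) (A : Fm) (hA : InSyn L A) (h : ¬ SetDer (insert A S.Γ) S.Δ) :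
    Stage L where
  Γ := insert A S.Γ
  Δ := S.Δ
  inSyn := by rw [Set.insert_union]; exact Set.forall_mem_insert.2 ⟨hA, S.inSyn⟩
  underiv := h
  fresh := by rw [Set.insert_union]; exact infinite_diff_varsOf_insert S.fresh A

def insertRight (S : Stage L) (A : Fm) (hA : InSyn L A) (h : ¬ SetDer S.Γ (insert A S.Δ)) :
    Stage L where
  Γ := S.Γ
  Δ := insert A S.Δ
  inSyn := by rw [Set.union_insert]; exact Set.forall_mem_insert.2 ⟨hA, S.inSyn⟩
  underiv := h
  fresh := by rw [Set.union_insert]; exact infinite_diff_varsOf_insert S.fresh A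

noncomputable def addLeft (S : Stage L) (A : Fm) (hA : InSyn L A)
    (h : ¬ SetDer (insert A S.Γ) S.Δ) : Stage L :=
  let T := S.insertLeft A hA h
  T.insertLeft (A.exInst T.freshVar) (hA.exInst T.freshVar_mem.1)
    (not_setDer_insert_exInst T.underiv (Set.mem_insert A S.Γ) T.freshVar_mem.2)

noncomputable def addRight (S : Stage L) (A : Fm) (hA : InSyn L A)
    (h : ¬ SetDer S.Γ (insert A S.Δ)) : Stage L :=
  let T := S.insertRight A hA h
  T.insertRight (A.allCInst T.freshVar) (hA.allCInst T.freshVar_mem.1)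
    (not_setDer_insert_allCInst T.underiv (Set.mem_insert A S.Δ) T.freshVar_mem.2)

open Classical in
/-- If `A` cannot join the left side, it can join the right side, by cut. -/
noncomputable def add (S : Stage L) (A : Fm) : Stage L :=
  if hA : InSyn L A then
    if h : SetDer (insert A S.Γ) S.Δ then S.addRight A hA fun h' => S.underiv (h'.cut h)
    else S.addLeft A hA h
  else S

theorem le_add (S : Stage L) (A : Fm) : S ≤ S.add A := by
  unfold add
  split_ifs
  · exact ⟨subset_rfl, (Set.subset_insert _ _).trans (Set.subset_insert _ _)⟩
  · exact ⟨(Set.subset_insert _ _).trans (Set.subset_insert _ _), subset_rfl⟩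
  · exact le_rfl

theorem henkinDecided_add (S : Stage L) {A : Fm} (hA : InSyn L A) :
    HenkinDecided L (S.add A).Γ (S.add A).Δ A := by
  unfold add
  split_ifs
  · exact .inr ⟨_, freshVar_mem _ |>.1, .inr (.inl rfl), .inl rfl⟩
  · exact .inl ⟨_, freshVar_mem _ |>.1, .inr (.inl rfl), .inl rfl⟩

noncomputable def chain (S : Stage L) (e : ℕ → Fm) : ℕ → Stage L
| 0 => S
| n + 1 => (chain S e n).add (e n)

theorem exists_primePair_lComplete (S : Stage L) :
    ∃ Γ' Δ' : Set Fm, S.Γ ⊆ Γ' ∧ S.Δ ⊆ Δ' ∧ PrimePair L Γ' Δ' ∧ LComplete L Γ' Δ' := by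
  obtain ⟨e, he⟩ := exists_surjective_nat Fm
  have hmono : Monotone (S.chain e) := monotone_nat_of_le_succ fun n => le_add _ (e n)
  have hΓ : ∀ n, (S.chain e n).Γ ⊆ ⋃ n, (S.chain e n).Γ := Set.subset_iUnion _
  have hΔ : ∀ n, (S.chain e n).Δ ⊆ ⋃ n, (S.chain e n).Δ := Set.subset_iUnion _
  refine ⟨_, _, hΓ 0, hΔ 0, primePair_lComplete_of_henkinDecided ?_ ?_ ?_⟩
  · rintro A (hA | hA) <;> obtain ⟨n, hn⟩ := Set.mem_iUnion.1 hA
    exacts [(S.chain e n).inSyn A (.inl hn), (S.chain e n).inSyn A (.inr hn)]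
  · exact not_setDer_iUnion (fun _ _ h => (hmono h).1) (fun _ _ h => (hmono h).2)
      fun n => (S.chain e n).underiv
  · intro A hA
    obtain ⟨k, rfl⟩ := he A
    exact ((S.chain e k).henkinDecided_add hA).mono (hΓ (k + 1)) (hΔ (k + 1))

end Stage

/-- Lindenbaum-type extension lemma: if a sequent `Γ ⇒ Δ` of
`L₁`-formulas is not derivable in G(FOC+J) and `L₂` extends `L₁` by a
countably infinite set of fresh variables, then there is a prime
`L₂`-complete pair `(Γ*,Δ*)` extending `(Γ,Δ)`, with `Γ* ∪ Δ*` all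
`L₂`-formulas. -/
theorem extension_lemma (L₁ L₂ : Set ℕ)
    (hsub : L₁ ⊆ L₂) (hfresh : (L₂ \ L₁).Infinite)
    (Γ Δ : Set Fm)
    (hΓ : ∀ A ∈ Γ, InSyn L₁ A) (hΔ : ∀ A ∈ Δ, InSyn L₁ A)
    (h : ¬ SetDer Γ Δ) :
    ∃ Γ' Δ' : Set Fm, Γ ⊆ Γ' ∧ Δ ⊆ Δ' ∧
      PrimePair L₂ Γ' Δ' ∧ LComplete L₂ Γ' Δ' := by
  have hsyn : ∀ A ∈ Γ ∪ Δ, InSyn L₁ A := fun A hA => hA.elim (hΓ A) (hΔ A)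
  let S : Stage L₂ :=
    { Γ, Δ
      inSyn := fun A hA => (hsyn A hA).trans hsub
      underiv := h
      fresh := hfresh.mono (Set.sdiff_subset_sdiff_right (varsOf_subset_iff.2 hsyn)) }
  exact S.exists_primePair_lComplete
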